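/- Let G be an abelian group, φ : G → G a group endomorphism, and k a positive integer. Then ent̃(φ^k) ≥ k · ent̃(φ) (as an inequality in [0,∞]). -/

import Mathlib

open Filter Topology ENNReal

variable {G : Type*}

/-- The `n`-th partial `φ`-trajectory of a subgroup `H`:
`T_n(φ,H) = H + φ(H) + ... + φ^{n-1}(H)`. -/
noncomputable def traj [AddCommGroup G] (φ : AddMonoid.End G) (H : AddSubgroup G) (n : ℕ) :
    AddSubgroup G :=
  ⨆ i ∈ Finset.range n, H.map (φ ^ i)

/-- `H` is `φ`-inert if `(H + φ(H))/H` is finite. -/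
def IsInert [AddCommGroup G] (φ : AddMonoid.End G) (H : AddSubgroup G) : Prop :=
  Finite (↥(H ⊔ H.map φ) ⧸ H.addSubgroupOf (H ⊔ H.map φ))

/-- The sequence `n ↦ log |T_n(φ,H)/H| / n`. -/
noncomputable def entFun [AddCommGroup G] (φ : AddMonoid.End G) (H : AddSubgroup G) (n : ℕ) : ℝ :=
  Real.log (Nat.card (↥(traj φ H n) ⧸ H.addSubgroupOf (traj φ H n))) / n

/-- The intrinsic entropy of `φ` with respect to `H`: the limit of `entFun φ H`. -/
noncomputable def entWrt [AddCommGroup G] (φ : AddMonoid.End G) (H : AddSubgroup G) : ℝ :=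
  limUnder atTop (entFun φ H)

/-- The intrinsic algebraic entropy of `φ`. -/
noncomputable def intrinsicEnt [AddCommGroup G] (φ : AddMonoid.End G) : ℝ≥0∞ :=
  ⨆ (H : AddSubgroup G) (_ : IsInert φ H), ENNReal.ofReal (entWrt φ H)

/-- The `φ`-trajectory of `H`: `T(φ,H) = ⋃_{n ≥ 1} T_n(φ,H)`. -/
noncomputable def trajAll [AddCommGroup G] (φ : AddMonoid.End G) (H : AddSubgroup G) :
    AddSubgroup G :=
  ⨆ n : ℕ, traj φ H (n + 1)

section TrajLemmas
variable [AddCommGroup G] (φ : AddMonoid.End G) (H : AddSubgroup G)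

theorem traj_zero : traj φ H 0 = ⊥ := by simp [traj]

theorem traj_succ (n : ℕ) : traj φ H (n + 1) = traj φ H n ⊔ H.map (φ ^ n) := by
  rw [traj, traj, Finset.range_add_one, Finset.iSup_insert, sup_comm]

theorem traj_one : traj φ H 1 = H := by
  rw [traj_succ, traj_zero, bot_sup_eq, pow_zero]
  exact AddSubgroup.map_id H

theorem traj_mono : Monotone (traj φ H) := by
  apply monotone_nat_of_le_succ
  intro n; rw [traj_succ]; exact le_sup_left

theorem map_le_traj (j n : ℕ) (h : j < n) : H.map (φ ^ j) ≤ traj φ H n := by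
  rw [traj]
  exact le_iSup₂ (f := fun i (_ : i ∈ Finset.range n) => H.map (φ ^ i)) j
    (Finset.mem_range.mpr h)

theorem traj_le_iff (n : ℕ) (K : AddSubgroup G) :
    traj φ H n ≤ K ↔ ∀ j < n, H.map (φ ^ j) ≤ K := by
  rw [traj, iSup₂_le_iff]
  simp [Finset.mem_range]

theorem map_traj (n : ℕ) (ψ : AddMonoid.End G) :
    (traj φ H n).map ψ = ⨆ i ∈ Finset.range n, H.map (ψ * φ ^ i) := by
  rw [traj]; erw [AddSubgroup.map_iSup]
  congr 1; funext i
  erw [AddSubgroup.map_iSup]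
  congr 1; funext hi
  erw [AddSubgroup.map_map]; rfl

theorem traj_succ' (n : ℕ) : traj φ H (n + 1) = H ⊔ (traj φ H n).map φ := by
  induction n with
  | zero => rw [traj_one, traj_zero]; erw [AddSubgroup.map_bot]; rw [sup_bot_eq]
  | succ m ih =>
    have h1 : (H.map (φ ^ m)).map φ = H.map (φ ^ (m+1)) := by
      erw [AddSubgroup.map_map]
      show H.map (φ * φ ^ m) = _
      rw [← pow_succ']
    calc traj φ H (m+2) = traj φ H (m+1) ⊔ H.map (φ^(m+1)) := traj_succ ..
      _ = (H ⊔ (traj φ H m).map φ) ⊔ (H.map (φ^m)).map φ := by rw [ih, h1]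
      _ = H ⊔ (traj φ H m ⊔ H.map (φ^m)).map φ := by rw [sup_assoc]; congr 1; exact (AddSubgroup.map_sup _ _ (φ : G →+ G)).symm
      _ = H ⊔ (traj φ H (m+1)).map φ := by rw [traj_succ]

theorem le_traj (n : ℕ) (hn : 1 ≤ n) : H ≤ traj φ H n :=
  le_trans (le_of_eq (traj_one φ H).symm) (traj_mono φ H hn)

theorem traj_succ_eq (n : ℕ) (hn : 1 ≤ n) :
    traj φ H (n + 1) = traj φ H n ⊔ (traj φ H n).map φ := by
  refine le_antisymm ?_ ?_
  · rw [traj_succ']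
    exact sup_le (le_trans (le_traj φ H n hn) le_sup_left) le_sup_right
  · refine sup_le (traj_mono φ H (by omega)) ?_
    rw [traj_succ' φ H n]; exact le_sup_right

theorem trajpow (k : ℕ) (hk : 1 ≤ k) (n : ℕ) :
    traj (φ ^ k) (traj φ H k) n = traj φ H (k * n) := by
  induction n with
  | zero => rw [traj_zero, Nat.mul_zero, traj_zero]
  | succ m ih =>
    rw [traj_succ, ih]
    have hmap : (traj φ H k).map ((φ ^ k) ^ m)
        = ⨆ i ∈ Finset.range k, H.map (φ ^ (k*m + i)) := by
      rw [← pow_mul, map_traj]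
      congr 1; funext i
      congr 1; funext hi
      rw [← pow_add]
    rw [hmap]
    refine le_antisymm ?_ ?_
    · refine sup_le (traj_mono φ H (by nlinarith)) ?_
      refine iSup₂_le fun i hi => ?_
      have hlt : k*m + i < k*(m+1) := by
        have := Finset.mem_range.mp hi; nlinarith
      exact map_le_traj φ H _ _ hlt
    · rw [traj_le_iff]
      intro j hj
      rcases Nat.lt_or_ge j (k*m) with h | h
      · exact le_trans (map_le_traj φ H j (k*m) h) le_sup_left
      · refine le_trans ?_ le_sup_right
        have hij : j = k*m + (j - k*m) := by omega
        have hlt : j - k*m < k := by nlinarith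
        rw [hij]
        exact le_iSup₂ (f := fun i (_ : i ∈ Finset.range k) => H.map (φ ^ (k*m + i)))
          (j - k*m) (Finset.mem_range.mpr hlt)

end TrajLemmas

theorem relindex_quot_eq [AddCommGroup G] (A B : AddSubgroup G) :
    A.relIndex B = Nat.card (↥B ⧸ A.addSubgroupOf B) := rfl

theorem key_surj [AddCommGroup G] (φ : AddMonoid.End G) (A B : AddSubgroup G) (hAB : A ≤ B)
    (hφA : A.map φ ≤ B) (hfin : A.relIndex B ≠ 0) :
    B.relIndex (B ⊔ B.map φ) ≠ 0 ∧ B.relIndex (B ⊔ B.map φ) ≤ A.relIndex B := by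
  set C := B ⊔ B.map φ with hC
  have hBC : B ≤ C := le_sup_left
  have hmem : ∀ x : ↥B, φ x ∈ C := fun x =>
    (le_sup_right : B.map φ ≤ C) (AddSubgroup.mem_map_of_mem φ x.2)
  let h : ↥B →+ ↥C := AddMonoidHom.codRestrict (φ.comp B.subtype) C hmem
  let ψ : ↥B →+ ↥C ⧸ B.addSubgroupOf C :=
    (QuotientAddGroup.mk' (B.addSubgroupOf C)).comp h
  have hker : ∀ a : ↥B, a ∈ A.addSubgroupOf B → ψ a = 0 := by
    intro a ha
    have haA : (a : G) ∈ A := ha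
    have h2 : φ a ∈ B := hφA (AddSubgroup.mem_map_of_mem φ haA)
    exact (QuotientAddGroup.eq_zero_iff _).mpr h2
  let f : (↥B ⧸ A.addSubgroupOf B) → (↥C ⧸ B.addSubgroupOf C) :=
    QuotientAddGroup.lift (A.addSubgroupOf B) ψ hker
  have hsurj : Function.Surjective f := by
    intro y
    refine QuotientAddGroup.induction_on y (fun x => ?_)
    have hx : (x : G) ∈ B ⊔ B.map φ := hC ▸ x.2
    rcases AddSubgroup.mem_sup.mp hx with ⟨b, hb, c, hc, hbc⟩
    rcases hc with ⟨b', hb', rfl⟩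
    refine ⟨QuotientAddGroup.mk ⟨b', hb'⟩, ?_⟩
    show QuotientAddGroup.mk (h ⟨b', hb'⟩) = QuotientAddGroup.mk x
    refine QuotientAddGroup.eq.mpr ?_
    show (↑(-(h ⟨b', hb'⟩) + x) : G) ∈ B
    have heq : (↑(-(h ⟨b', hb'⟩) + x) : G) = -(φ b') + x := rfl
    rw [heq, ← hbc]
    convert hb using 1; rw [add_comm b]; exact neg_add_cancel_left _ _
  have hAfin : Finite (↥B ⧸ A.addSubgroupOf B) :=
    Nat.finite_of_card_ne_zero (by rwa [relindex_quot_eq] at hfin)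
  have hCfin : Finite (↥C ⧸ B.addSubgroupOf C) := Finite.of_surjective f hsurj
  refine ⟨?_, ?_⟩
  · rw [relindex_quot_eq]
    exact Nat.card_ne_zero.mpr ⟨inferInstance, hCfin⟩
  · rw [relindex_quot_eq B C, relindex_quot_eq A B]
    exact Nat.card_le_card_of_surjective f hsurj

theorem lemA [AddCommGroup G] (φ : AddMonoid.End G) (H : AddSubgroup G) (hin : IsInert φ H) :
    ∃ L : ℝ, 0 ≤ L ∧
      Tendsto (fun n => Real.log (H.relIndex (traj φ H n)) / n) atTop (𝓝 L) ∧
      ∀ n : ℕ, H.relIndex (traj φ H (n + 1)) ≠ 0 := by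
  have h2eq : traj φ H 2 = H ⊔ H.map φ := by
    rw [traj_succ_eq φ H 1 le_rfl, traj_one]
  set b' : ℕ → ℕ := fun n => (traj φ H (n+1)).relIndex (traj φ H (n+2)) with hb'
  have hb'0 : b' 0 ≠ 0 := by
    have h0 : b' 0 = H.relIndex (H ⊔ H.map φ) := by
      show (traj φ H 1).relIndex (traj φ H 2) = _; rw [traj_one, h2eq]
    rw [h0, relindex_quot_eq]
    exact Nat.card_ne_zero.mpr ⟨inferInstance, hin⟩
  have step : ∀ n, b' n ≠ 0 → b' (n+1) ≠ 0 ∧ b' (n+1) ≤ b' n := by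
    intro n hn
    have hφA : (traj φ H (n+1)).map φ ≤ traj φ H (n+2) := by
      rw [traj_succ_eq φ H (n+1) (by omega)]; exact le_sup_right
    have h3 : traj φ H (n+3) = traj φ H (n+2) ⊔ (traj φ H (n+2)).map φ :=
      traj_succ_eq φ H (n+2) (by omega)
    have hk := key_surj φ (traj φ H (n+1)) (traj φ H (n+2))
      (traj_mono φ H (by omega)) hφA hn
    constructor
    · show (traj φ H (n+2)).relIndex (traj φ H (n+3)) ≠ 0
      rw [h3]; exact hk.1
    · show (traj φ H (n+2)).relIndex (traj φ H (n+3)) ≤ b' n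
      rw [h3]; exact hk.2
  have nz : ∀ n, b' n ≠ 0 := by
    intro n; induction n with
    | zero => exact hb'0
    | succ m ih => exact (step m ih).1
  have anti : ∀ n, b' (n+1) ≤ b' n := fun n => (step n (nz n)).2
  set b : ℕ → ℝ := fun n => Real.log (b' n) with hbdef
  have hbanti : Antitone b := by
    apply antitone_nat_of_succ_le
    intro n
    exact Real.log_le_log (by exact_mod_cast Nat.pos_of_ne_zero (nz (n+1)))
      (by exact_mod_cast anti n)
  have hbnonneg : ∀ n, 0 ≤ b n := fun n => Real.log_natCast_nonneg _
  set L : ℝ := ⨅ n, b n with hLdef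
  have hbL : Tendsto b atTop (𝓝 L) :=
    tendsto_atTop_ciInf hbanti ⟨0, fun x ⟨n, hn⟩ => hn ▸ hbnonneg n⟩
  have hL0 : 0 ≤ L := le_ciInf hbnonneg
  have prodrel : ∀ n, H.relIndex (traj φ H (n+1)) = ∏ i ∈ Finset.range n, b' i := by
    intro n; induction n with
    | zero => rw [traj_one]; simp [AddSubgroup.relIndex_self]
    | succ m ih =>
      rw [Finset.prod_range_succ, ← ih,
        AddSubgroup.relIndex_mul_relIndex H (traj φ H (m+1)) (traj φ H (m+2))
          (le_traj φ H (m+1) (by omega)) (traj_mono φ H (by omega))]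
  have hcnz : ∀ n : ℕ, H.relIndex (traj φ H (n+1)) ≠ 0 := by
    intro n; rw [prodrel]
    exact Finset.prod_ne_zero_iff.mpr fun i _ => nz i
  have logsum : ∀ n, Real.log (H.relIndex (traj φ H (n+1))) = ∑ i ∈ Finset.range n, b i := by
    intro n
    rw [prodrel, Nat.cast_prod, Real.log_prod (fun i _ => Nat.cast_ne_zero.mpr (nz i))]
  have hces : Tendsto (fun n : ℕ => (∑ i ∈ Finset.range n, b i) / n) atTop (𝓝 L) := by
    refine hbL.cesaro.congr (fun n => ?_)
    rw [inv_mul_eq_div]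
  have hquot : Tendsto (fun n : ℕ => (n : ℝ) / ((n : ℝ) + 1)) atTop (𝓝 1) := by
    have h0 := tendsto_one_div_add_atTop_nhds_zero_nat (𝕜 := ℝ)
    have h1 : Tendsto (fun n : ℕ => 1 - 1 / ((n : ℝ) + 1)) atTop (𝓝 (1 - 0)) :=
      (tendsto_const_nhds : Tendsto (fun _ : ℕ => (1:ℝ)) atTop (𝓝 1)).sub h0
    rw [sub_zero] at h1
    refine h1.congr (fun n => ?_)
    field_simp
    ring
  have hmul := hces.mul hquot
  rw [mul_one] at hmul
  refine ⟨L, hL0, ?_, hcnz⟩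
  apply (tendsto_add_atTop_iff_nat 1).mp
  refine hmul.congr (fun n => ?_)
  rw [logsum n]
  rcases Nat.eq_zero_or_pos n with h | h
  · subst h; simp
  · have hn : (n : ℝ) ≠ 0 := Nat.cast_ne_zero.mpr (by omega)
    push_cast
    rw [div_mul_div_comm, mul_comm ((∑ i ∈ Finset.range n, b i)) (n:ℝ),
      mul_div_mul_left _ _ hn]

/-- Half of the Logarithmic Law: `ent̃(φ^k) ≥ k · ent̃(φ)` in `[0,∞]`. -/
theorem le_intrinsicEnt_pow [AddCommGroup G] (φ : AddMonoid.End G) (k : ℕ) (hk : 0 < k) :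
    (k : ℝ≥0∞) * intrinsicEnt φ ≤ intrinsicEnt (φ ^ k) := by
  unfold intrinsicEnt
  rw [ENNReal.mul_iSup]
  refine iSup_le fun H => ?_
  rw [ENNReal.mul_iSup]
  refine iSup_le fun hin => ?_
  obtain ⟨L, hL0, htend, hcnz⟩ := lemA φ H hin
  have hcnz' : ∀ m : ℕ, 1 ≤ m → H.relIndex (traj φ H m) ≠ 0 := by
    intro m hm
    cases m with
    | zero => omega
    | succ j => exact hcnz j
  have hentH : Tendsto (entFun φ H) atTop (𝓝 L) := htend
  have hent : entWrt φ H = L := hentH.limUnder_eq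
  set H' := traj φ H k with hH'
  have hpow : ∀ n, traj (φ^k) H' n = traj φ H (k*n) := trajpow φ H k hk
  have tower : ∀ n : ℕ, 1 ≤ n →
      H.relIndex H' * H'.relIndex (traj φ H (k*n)) = H.relIndex (traj φ H (k*n)) := by
    intro n hn
    exact AddSubgroup.relIndex_mul_relIndex H H' (traj φ H (k*n)) (le_traj φ H k hk)
      (traj_mono φ H (le_mul_of_one_le_right (Nat.zero_le k) hn))
  have hkn1 : ∀ n : ℕ, 1 ≤ n → 1 ≤ k * n := fun n hn => by nlinarith
  have hne : ∀ n : ℕ, 1 ≤ n → H'.relIndex (traj φ H (k*n)) ≠ 0 := by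
    intro n hn h0
    have h1 := tower n hn
    rw [h0, mul_zero] at h1
    exact hcnz' (k*n) (hkn1 n hn) h1.symm
  -- inertness of H' for φ^k
  have hsup2 : H' ⊔ H'.map (φ^k) = traj φ H (k*2) := by
    have h2 : traj (φ^k) H' 2 = H' ⊔ H'.map (φ^k) := by
      rw [traj_succ, traj_one, pow_one]
    rw [← h2, hpow 2]
  have hInert' : IsInert (φ^k) H' := by
    show Finite (↥(H' ⊔ H'.map (φ^k)) ⧸ H'.addSubgroupOf (H' ⊔ H'.map (φ^k)))
    rw [hsup2]
    exact Nat.finite_of_card_ne_zero (by rw [← relindex_quot_eq]; exact hne 2 one_le_two)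
  -- limit for φ^k
  set c : ℕ → ℝ := fun m => Real.log (H.relIndex (traj φ H m)) with hcdef
  have hknt : Tendsto (fun n : ℕ => k * n) atTop atTop :=
    tendsto_atTop_mono (fun n => le_mul_of_one_le_left (Nat.zero_le n) hk) tendsto_id
  have hcomp : Tendsto (fun n : ℕ => c (k*n) / ((k*n : ℕ) : ℝ)) atTop (𝓝 L) := htend.comp hknt
  have h2 : Tendsto (fun n : ℕ => (k:ℝ) * (c (k*n) / ((k*n : ℕ) : ℝ))) atTop (𝓝 ((k:ℝ)*L)) :=
    hcomp.const_mul _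
  have h3 : Tendsto (fun n : ℕ => c k / n) atTop (𝓝 0) :=
    tendsto_const_div_atTop_nhds_zero_nat _
  have h4 := h2.sub h3
  rw [sub_zero] at h4
  have heq : ∀ n : ℕ, 1 ≤ n →
      entFun (φ^k) H' n = (k:ℝ) * (c (k*n) / ((k*n : ℕ) : ℝ)) - c k / n := by
    intro n hn
    have e1 : entFun (φ^k) H' n = Real.log (H'.relIndex (traj (φ^k) H' n)) / n := rfl
    rw [e1, hpow n]
    have hd : ((H.relIndex H' : ℕ) : ℝ) ≠ 0 := Nat.cast_ne_zero.mpr (hcnz' k hk)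
    have hX : ((H.relIndex (traj φ H (k*n)) : ℕ) : ℝ) ≠ 0 :=
      Nat.cast_ne_zero.mpr (hcnz' (k*n) (hkn1 n hn))
    have hb : ((H'.relIndex (traj φ H (k*n)) : ℕ) : ℝ)
        = ((H.relIndex (traj φ H (k*n)) : ℕ) : ℝ) / ((H.relIndex H' : ℕ) : ℝ) := by
      rw [eq_div_iff hd, mul_comm]
      exact_mod_cast tower n hn
    rw [hb, Real.log_div hX hd]
    have hn0 : (n : ℝ) ≠ 0 := Nat.cast_ne_zero.mpr (by omega)
    have hk0 : (k : ℝ) ≠ 0 := Nat.cast_ne_zero.mpr (by omega)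
    have hcast : ((k*n : ℕ) : ℝ) = (k:ℝ) * n := by push_cast; ring
    rw [hcast, sub_div]
    congr 1
    rw [mul_div_assoc']
    rw [mul_div_mul_left _ _ hk0]
  have hev : (fun n : ℕ => (k:ℝ) * (c (k*n) / ((k*n : ℕ) : ℝ)) - c k / n)
      =ᶠ[atTop] entFun (φ^k) H' := by
    filter_upwards [eventually_ge_atTop 1] with n hn
    exact (heq n hn).symm
  have htend' : Tendsto (entFun (φ^k) H') atTop (𝓝 ((k:ℝ)*L)) := Tendsto.congr' hev h4
  have hent' : entWrt (φ^k) H' = (k:ℝ)*L := htend'.limUnder_eq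
  calc (k : ℝ≥0∞) * ENNReal.ofReal (entWrt φ H)
      = ENNReal.ofReal ((k:ℝ) * L) := by
        rw [hent, ← ENNReal.ofReal_natCast k, ← ENNReal.ofReal_mul (by positivity)]
    _ ≤ ⨆ (K : AddSubgroup G) (_ : IsInert (φ^k) K), ENNReal.ofReal (entWrt (φ^k) K) := by
        rw [← hent']
        exact le_iSup₂_of_le H' hInert' le_rfl
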